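/- arXiv:math/0702259 — 3 statements merged into one kernel-verified Lean document; each statement's English description precedes it below -/
import Mathlib

section
/- (Discrete Poisson summation identity for exponential sums.) Let γ > 0, 0 < δ ≤ π/γ, and let G ∈ H¹₀(−γ, γ) with Fourier transform g(t) = ∫ G(x) e^{−itx} dx. Let (ω_k) be a strictly increasing sequence of reals and x(t) = Σ_k x_k e^{iω_k t} a finite sum whose coefficients satisfy x_k = 0 whenever |ω_k| > π/δ − γ/2. Then δ·Σ_{j∈ℤ} g(jδ)|x(jδ)|² = 2π·Σ_{k,n} G(ω_k − ω_n)·x_k·conj(x_n). -/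
/-!
Periodize `G` with period `T = 2π/δ`. As `γ ≤ T/2`, `G` vanishes at `±T/2`, so the periodization
`F` is continuous; its Fourier coefficients are `g(jδ)/T`. They are absolutely summable: integrating
by parts, the `j`-th one is `T/(2πij)` times that of `G' ∈ L²`, and Cauchy–Schwarz against `1/j`
applies. Hence the Fourier series of `F` converges pointwise to `F`, and expanding `|x(jδ)|²` into
the exponentials `e^{i(ω_k - ω_n)jδ}` turns the left-hand side into `2π Σ c_k c̄_n F(ω_k - ω_n)`.
The cut-off on the coefficients keeps `|ω_k - ω_n| ≤ T - γ`, where `F` agrees with `G`.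
-/

open MeasureTheory Real Complex ComplexConjugate

theorem summable_mul_of_summable_sq {ι : Type*} {f g : ι → ℝ}
    (hf : Summable fun i => f i ^ 2) (hg : Summable fun i => g i ^ 2) :
    Summable fun i => f i * g i :=
  ((hf.add hg).div_const 2).of_norm_bounded fun i => by
    rw [Real.norm_eq_abs, abs_mul, le_div_iff₀ two_pos]
    nlinarith [sq_nonneg (|f i| - |g i|), sq_abs (f i), sq_abs (g i)]

theorem summable_fourierCoeffOn_of_hasDerivAt {a b : ℝ} (hab : a < b) {f f' : ℝ → ℂ}
    (hf : ∀ x ∈ Set.uIcc a b, HasDerivAt f (f' x) x) (hfab : f a = f b)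
    (hf' : MemLp f' 2 (volume.restrict (Set.Ioc a b))) :
    Summable (fourierCoeffOn hab f) := by
  have hf'int : IntervalIntegrable f' volume a b :=
    (intervalIntegrable_iff_integrableOn_Ioc_of_le hab.le).2 (hf'.integrable one_le_two)
  have hbound : Summable fun n : ℤ =>
      (b - a) / (2 * π) * (|(n : ℝ)|⁻¹ * ‖fourierCoeffOn hab f' n‖) := by
    refine (summable_mul_of_summable_sq ?_ (hasSum_sq_fourierCoeffOn hab hf').summable).mul_left _
    simpa [inv_pow, sq_abs] using (summable_one_div_int_pow (p := 2)).2 one_lt_two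
  refine hbound.of_norm_bounded_eventually <| (Filter.eventually_cofinite_ne 0).mono fun n hn => ?_
  rw [fourierCoeffOn_of_hasDerivAt hab hn hf hf'int, hfab, sub_self, mul_zero, zero_sub,
    ← ofReal_sub]
  simp only [norm_mul, norm_neg, norm_div, norm_one, norm_real, norm_I, norm_intCast,
    Real.norm_of_nonneg pi_pos.le, Real.norm_of_nonneg (sub_pos.2 hab).le, Complex.norm_ofNat]
  exact le_of_eq (by field_simp)

theorem ofReal_norm_sq_sum_mul_exp {ι : Type*} (s : Finset ι) (c : ι → ℂ) (ω : ι → ℝ) (t : ℝ) :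
    (‖∑ k ∈ s, c k * exp (I * (ω k * t))‖ : ℂ) ^ 2 =
      ∑ k ∈ s, ∑ n ∈ s, c k * conj (c n) * exp (I * ((ω k - ω n : ℝ) * t)) := by
  rw [← Complex.mul_conj', map_sum, Finset.sum_mul_sum]
  refine Finset.sum_congr rfl fun k _ => Finset.sum_congr rfl fun n _ => ?_
  rw [map_mul, ← exp_conj, mul_mul_mul_comm, ← Complex.exp_add]
  simp only [map_mul, conj_I, conj_ofReal, ofReal_sub]
  ring_nf

theorem fourier_coe_apply_eq_exp {T : ℝ} [Fact (0 < T)] (j : ℤ) (r : ℝ) :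
    fourier j (r : AddCircle T) = exp (I * (r * ((j * (2 * π / T) : ℝ)))) := by
  rw [fourier_coe_apply]
  push_cast
  ring_nf

theorem hasSum_fourierCoeff_mul_sq_norm_sum_mul_exp {T : ℝ} [Fact (0 < T)]
    {F : C(AddCircle T, ℂ)} (hF : Summable (fourierCoeff F)) {ι : Type*} (s : Finset ι)
    (c : ι → ℂ) (ω : ι → ℝ) :
    HasSum (fun j : ℤ => fourierCoeff F j *
        (‖∑ k ∈ s, c k * exp (I * (ω k * ((j * (2 * π / T) : ℝ))))‖ : ℂ) ^ 2)
      (∑ k ∈ s, ∑ n ∈ s, c k * conj (c n) * F ((ω k - ω n : ℝ) : AddCircle T)) := by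
  refine (hasSum_sum fun k _ => hasSum_sum fun n _ =>
    (has_pointwise_sum_fourier_series_of_summable hF ((ω k - ω n : ℝ) : AddCircle T)).mul_left
      (c k * conj (c n))).congr_fun fun j => ?_
  simp only [ofReal_norm_sq_sum_mul_exp, Finset.mul_sum, fourier_coe_apply_eq_exp, smul_eq_mul]
  exact Finset.sum_congr rfl fun k _ => Finset.sum_congr rfl fun n _ => by ring

section SymmetricSupport

variable {T : ℝ} [hT : Fact (0 < T)] {f : ℝ → ℂ}

theorem integral_mul_exp_eq_mul_fourierCoeff_liftIco (hf : ∀ x, T / 2 ≤ |x| → f x = 0) (n : ℤ) :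
    ∫ x, f x * exp (-((n * (2 * π / T) : ℝ) * x) * I) =
      T * fourierCoeff (AddCircle.liftIco T (-(T / 2)) f) n := by
  have hvanish (x : ℝ) (hx : x ∉ Set.Ioc (-(T / 2)) (-(T / 2) + T)) :
      f x * exp (-((n * (2 * π / T) : ℝ) * x) * I) = 0 := by
    rw [hf x (le_abs.2 (by by_contra! h; exact hx ⟨by linarith, by linarith⟩)), zero_mul]
  rw [fourierCoeff_liftIco_eq, fourierCoeffOn_eq_integral, add_sub_cancel_left,
    ← setIntegral_eq_integral_of_forall_compl_eq_zero hvanish,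
    ← intervalIntegral.integral_of_le (le_add_of_nonneg_right hT.out.le), real_smul,
    ← mul_assoc, ofReal_div, ofReal_one, mul_one_div_cancel (ofReal_ne_zero.2 hT.out.ne'), one_mul]
  refine intervalIntegral.integral_congr fun x _ => ?_
  rw [fourier_coe_apply, smul_eq_mul, mul_comm]
  congr 1
  push_cast
  field_simp

theorem liftIco_coe_apply_of_abs_le {γ : ℝ} (hf : ∀ x, γ ≤ |x| → f x = 0) {r : ℝ}
    (hr : |r| ≤ T - γ) :
    AddCircle.liftIco T (-(T / 2)) f r = f r := by
  by_cases hmem : r ∈ Set.Ico (-(T / 2)) (-(T / 2) + T)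
  · exact AddCircle.liftIco_coe_apply hmem
  set y := toIcoMod hT.out (-(T / 2)) r
  have hy : y ∈ Set.Ico (-(T / 2)) (-(T / 2) + T) := toIcoMod_mem_Ico _ _ _
  have hk : toIcoDiv hT.out (-(T / 2)) r ≠ 0 := fun hk =>
    hmem ((toIcoMod_eq_self hT.out).1 (by rw [toIcoMod, hk, zero_smul, sub_zero]))
  have hry : T ≤ |r - y| := by
    rw [self_sub_toIcoMod, zsmul_eq_mul, abs_mul, abs_of_pos hT.out]
    exact le_mul_of_one_le_left hT.out.le (by exact_mod_cast Int.one_le_abs hk)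
  have hy_le : |y| ≤ T / 2 := abs_le.2 ⟨hy.1, by linarith [hy.2]⟩
  have hr' : γ ≤ |r| := by linarith [abs_sub r y]
  have hy' : γ ≤ |y| := by linarith [abs_sub r y]
  change f y = f r
  rw [hf _ hy', hf _ hr']

theorem mul_conj_mul_liftIco_coe_sub_eq {γ : ℝ} (hf : ∀ x, γ ≤ |x| → f x = 0) {ι : Type*}
    {c : ι → ℂ} {ω : ι → ℝ} (hc : ∀ k, T / 2 - γ / 2 < |ω k| → c k = 0) (k n : ι) :
    c k * conj (c n) * AddCircle.liftIco T (-(T / 2)) f ((ω k - ω n : ℝ) : AddCircle T) =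
      f (ω k - ω n) * c k * conj (c n) := by
  by_cases hk : c k = 0
  · simp [hk]
  by_cases hn : c n = 0
  · simp [hn]
  have hωk := not_lt.1 (mt (hc k) hk)
  have hωn := not_lt.1 (mt (hc n) hn)
  rw [liftIco_coe_apply_of_abs_le hf (by linarith [abs_sub (ω k) (ω n)])]
  ring

end SymmetricSupport

theorem discrete_poisson_identity_general (γ δ : ℝ) (hγ : 0 < γ) (hδ : 0 < δ)
    (hδγ : δ ≤ Real.pi / γ)
    -- `G ∈ H¹₀(-γ, γ)` : continuous, vanishing outside `(-γ, γ)`,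
    -- with derivative `G'` in `L²`
    (G G' : ℝ → ℝ) (hGsupp : ∀ x : ℝ, γ ≤ |x| → G x = 0)
    (hGderiv : ∀ x : ℝ, HasDerivAt G (G' x) x)
    (hG'L2 : MeasureTheory.MemLp G' 2 MeasureTheory.volume)
    -- Fourier transform of `G`
    (g : ℝ → ℂ)
    (hg : ∀ t : ℝ, g t = ∫ x : ℝ, (G x : ℂ) * Complex.exp (-(t * x) * Complex.I))
    -- exponents and coefficients
    (ω : ℤ → ℝ)
    (s : Finset ℤ) (c : ℤ → ℂ)
    (hcut : ∀ k : ℤ, Real.pi / δ - γ / 2 < |ω k| → c k = 0)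
    (x : ℝ → ℂ)
    (hx : ∀ t : ℝ, x t = ∑ k ∈ s, c k * Complex.exp (Complex.I * (ω k * t))) :
    (δ : ℂ) * ∑' j : ℤ, g ((j : ℝ) * δ) * ((‖x ((j : ℝ) * δ)‖ : ℂ) ^ 2) =
      2 * (Real.pi : ℂ) *
        ∑ k ∈ s, ∑ n ∈ s, (G (ω k - ω n) : ℂ) * c k * (starRingEnd ℂ) (c n) := by
  obtain ⟨T, hT, rfl⟩ : ∃ T > 0, δ = 2 * π / T := ⟨2 * π / δ, by positivity, by field_simp⟩
  have : Fact (0 < T) := ⟨hT⟩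
  have hγT : 2 * γ ≤ T := by
    rw [div_le_div_iff₀ hT hγ] at hδγ
    nlinarith [pi_pos]
  have hGγ (r : ℝ) (hr : γ ≤ |r|) : (G r : ℂ) = 0 := by rw [hGsupp r hr, ofReal_zero]
  have hGT (r : ℝ) (hr : T / 2 ≤ |r|) : (G r : ℂ) = 0 := hGγ r (by linarith)
  have hends : (G (-(T / 2)) : ℂ) = G (-(T / 2) + T) := by
    rw [hGT _ (le_abs.2 (by right; linarith)), hGT _ (le_abs.2 (by left; linarith))]
  let F : C(AddCircle T, ℂ) := ⟨AddCircle.liftIco T (-(T / 2)) fun r => (G r : ℂ),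
    AddCircle.liftIco_continuous hends (continuous_ofReal.comp
      (Differentiable.continuous fun r => (hGderiv r).differentiableAt)).continuousOn⟩
  have hF : Summable (fourierCoeff F) := by
    convert summable_fourierCoeffOn_of_hasDerivAt (lt_add_of_pos_right _ hT)
      (fun r _ => (hGderiv r).ofReal_comp) hends (hG'L2.restrict _).ofReal using 1
    exact funext fun n => fourierCoeff_liftIco_eq _ n
  have hgF (j : ℤ) : g (j * (2 * π / T)) = T * fourierCoeff F j :=
    (hg _).trans (integral_mul_exp_eq_mul_fourierCoeff_liftIco hGT j)
  have hcut' (k : ℤ) (hk : T / 2 - γ / 2 < |ω k|) : c k = 0 :=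
    hcut k (by rwa [show π / (2 * π / T) = T / 2 by field_simp])
  simp_rw [hgF, hx, mul_assoc (T : ℂ), tsum_mul_left,
    (hasSum_fourierCoeff_mul_sq_norm_sum_mul_exp hF s c ω).tsum_eq,
    F, ContinuousMap.coe_mk, mul_conj_mul_liftIco_coe_sub_eq hGγ hcut']
  rw [← mul_assoc, ← ofReal_mul, div_mul_cancel₀ _ hT.ne']
  push_cast
  rfl

/-- Discrete Poisson summation identity for exponential sums. -/
theorem discrete_poisson_identity (γ δ : ℝ) (hγ : 0 < γ) (hδ : 0 < δ)
    (hδγ : δ ≤ Real.pi / γ)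
    -- `G ∈ H¹₀(-γ, γ)` : continuous, vanishing outside `(-γ, γ)`,
    -- with derivative `G'` in `L²`
    (G G' : ℝ → ℝ) (hGsupp : ∀ x : ℝ, γ ≤ |x| → G x = 0)
    (hGderiv : ∀ x : ℝ, HasDerivAt G (G' x) x)
    (hG'L2 : MeasureTheory.MemLp G' 2 MeasureTheory.volume)
    -- Fourier transform of `G`
    (g : ℝ → ℂ)
    (hg : ∀ t : ℝ, g t = ∫ x : ℝ, (G x : ℂ) * Complex.exp (-(t * x) * Complex.I))
    -- exponents and coefficients
    (ω : ℤ → ℝ) (hω : StrictMono ω)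
    (s : Finset ℤ) (c : ℤ → ℂ) (hc : ∀ k ∉ s, c k = 0)
    (hcut : ∀ k : ℤ, Real.pi / δ - γ / 2 < |ω k| → c k = 0)
    (x : ℝ → ℂ)
    (hx : ∀ t : ℝ, x t = ∑ k ∈ s, c k * Complex.exp (Complex.I * (ω k * t))) :
    (δ : ℂ) * ∑' j : ℤ, g ((j : ℝ) * δ) * ((‖x ((j : ℝ) * δ)‖ : ℂ) ^ 2) =
      2 * (Real.pi : ℂ) *
        ∑ k ∈ s, ∑ n ∈ s, (G (ω k - ω n) : ℂ) * c k * (starRingEnd ℂ) (c n) :=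
  discrete_poisson_identity_general γ δ hγ hδ hδγ G G' hGsupp hGderiv hG'L2 g hg ω s c hcut x hx
end

section
/- Let T > 0 and γ' > 0. The function f(ω) := sin((ω − ω')T) / (J'·(e^{i(ω−ω')δ} − 1)) (with T = J'δ) is Lipschitz on the set {ω : γ' ≤ |ω − ω'| < 2c'/δ} with a Lipschitz constant L ≤ 1/(ε'γ') + 1/(T·(ε'γ')²), where ε' = ε'(T) < 1 and c' are as in Lemma 5(a). -/
open Real Complex

/-!
Write `f = s / D` with `s ω = sin ((ω - ω') T)` and `D ω = J' (e^{i(ω-ω')δ} - 1)`. Both `s` and `D`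
are `T`-Lipschitz, `|s| ≤ 1`, and on the given set `|D| ≥ T ε' γ'`: indeed
`|e^{iθ} - 1| = 2 |sin (θ/2)| > ε' |θ|` for `0 < |θ/2| < c'` by the sinc bound of Lemma 5(a).
The quotient rule `s/D - s'/D' = (s - s')/D + s' (D' - D)/(D D')` then gives the constant.
-/

theorem norm_exp_I_mul_ofReal_sub_exp_I_mul_ofReal_le (a b : ℝ) :
    ‖exp (I * a) - exp (I * b)‖ ≤ |a - b| := by
  have hfactor : exp (I * a) - exp (I * b) = exp (I * b) * (exp (I * ↑(a - b)) - 1) := by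
    rw [mul_sub, ← Complex.exp_add]; push_cast; ring_nf
  rw [hfactor, norm_mul, norm_exp_I_mul_ofReal, one_mul]
  exact Real.norm_exp_I_mul_ofReal_sub_one_le

theorem mul_abs_le_norm_exp_I_mul_ofReal_sub_one {ε c θ : ℝ}
    (hsinc : ∀ x : ℝ, 0 < |x| → |x| < c → ε < |Real.sin x / x|)
    (hθ : 0 < |θ|) (hθc : |θ| < 2 * c) :
    ε * |θ| ≤ ‖exp (I * θ) - 1‖ := by
  have habs_half : |θ / 2| = |θ| / 2 := by rw [abs_div, abs_two]
  have hhalf : 0 < |θ / 2| := by rw [habs_half]; positivity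
  have hsin : ε * |θ / 2| < |Real.sin (θ / 2)| := by
    have := hsinc (θ / 2) hhalf (by rw [habs_half]; linarith)
    rwa [abs_div, lt_div_iff₀ hhalf] at this
  rw [norm_exp_I_mul_ofReal_sub_one, norm_mul, Real.norm_eq_abs, Real.norm_eq_abs, abs_two]
  rw [habs_half] at hsin
  linarith

theorem mul_mul_le_norm_exp_I_mul_ofReal_sub_one {ε c γ δ t : ℝ}
    (hsinc : ∀ x : ℝ, 0 < |x| → |x| < c → ε < |Real.sin x / x|)
    (hε : 0 ≤ ε) (hγ : 0 < γ) (hδ : 0 < δ) (ht : γ ≤ |t|) (htc : |t| < 2 * c / δ) :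
    ε * γ * δ ≤ ‖exp (I * ↑(t * δ)) - 1‖ := by
  have habs : |t * δ| = |t| * δ := by rw [abs_mul, abs_of_pos hδ]
  have hpos : 0 < |t * δ| := by rw [habs]; exact mul_pos (hγ.trans_le ht) hδ
  have hlt : |t * δ| < 2 * c := by rw [habs, ← lt_div_iff₀ hδ]; exact htc
  calc ε * γ * δ ≤ ε * |t * δ| := by rw [habs, mul_assoc]; gcongr
    _ ≤ _ := mul_abs_le_norm_exp_I_mul_ofReal_sub_one hsinc hpos hlt

theorem norm_div_sub_div_le {𝕜 : Type*} [NormedField 𝕜] {a a' b b' : 𝕜} {K M P : ℝ}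
    (hP : 0 < P) (hb : P ≤ ‖b‖) (hb' : P ≤ ‖b'‖)
    (ha : ‖a - a'‖ ≤ K) (ha' : ‖a'‖ ≤ M) (hbb : ‖b - b'‖ ≤ K) :
    ‖a / b - a' / b'‖ ≤ K / P + M * K / P ^ 2 := by
  have hb0 : b ≠ 0 := norm_pos_iff.mp (hP.trans_le hb)
  have hb'0 : b' ≠ 0 := norm_pos_iff.mp (hP.trans_le hb')
  have hsplit : a / b - a' / b' = (a - a') / b + a' * (b' - b) / (b * b') := by
    field_simp; ring
  have hK : 0 ≤ K := (norm_nonneg _).trans ha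
  have hM : 0 ≤ M := (norm_nonneg _).trans ha'
  calc ‖a / b - a' / b'‖ ≤ ‖a - a'‖ / ‖b‖ + ‖a'‖ * ‖b - b'‖ / (‖b‖ * ‖b'‖) := by
        rw [hsplit]
        refine (norm_add_le _ _).trans_eq ?_
        rw [norm_div, norm_div, norm_mul, norm_mul, norm_sub_rev b']
    _ ≤ K / P + M * K / P ^ 2 := by
        rw [sq]
        gcongr

theorem filter_function_lipschitz_general (ω' δ γ' T ε' c' : ℝ) (J' : ℕ)
    (hδ : 0 < δ) (hJ' : 0 < J') (hTdef : T = (J' : ℝ) * δ)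
    (hγ' : 0 < γ') (hε'pos : 0 < ε')
    -- `ε'` and `c'` are as in Lemma 5(a):
    (hsinc : ∀ x : ℝ, 0 < |x| → |x| < c' → ε' < |Real.sin x / x|)
    (f : ℝ → ℂ)
    (hf : ∀ ω : ℝ, f ω = (Real.sin ((ω - ω') * T) : ℂ) /
      ((J' : ℂ) * (Complex.exp (Complex.I * ((ω - ω') * δ)) - 1))) :
    ∀ ω₁ ω₂ : ℝ,
      γ' ≤ |ω₁ - ω'| → |ω₁ - ω'| < 2 * c' / δ →
      γ' ≤ |ω₂ - ω'| → |ω₂ - ω'| < 2 * c' / δ →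
      ‖f ω₁ - f ω₂‖ ≤
        (1 / (ε' * γ') + 1 / (T * (ε' * γ') ^ 2)) * |ω₁ - ω₂| := by
  intro ω₁ ω₂ h₁l h₁u h₂l h₂u
  have hT : 0 < T := hTdef ▸ by positivity
  set D : ℝ → ℂ := fun ω ↦ (J' : ℂ) * (exp (I * ↑((ω - ω') * δ)) - 1) with hD
  have hfD : ∀ ω, f ω = ↑(Real.sin ((ω - ω') * T)) / D ω := fun ω ↦ by
    simp only [hf, hD, ofReal_mul, ofReal_sub]
  have hD_lower : ∀ ω, γ' ≤ |ω - ω'| → |ω - ω'| < 2 * c' / δ → T * (ε' * γ') ≤ ‖D ω‖ := by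
    intro ω hl hu
    have := mul_mul_le_norm_exp_I_mul_ofReal_sub_one hsinc hε'pos.le hγ' hδ hl hu
    rw [hD, norm_mul, Complex.norm_natCast, hTdef]
    nlinarith [(Nat.cast_pos (α := ℝ)).mpr hJ']
  have hD_lip : ‖D ω₁ - D ω₂‖ ≤ T * |ω₁ - ω₂| := by
    have := norm_exp_I_mul_ofReal_sub_exp_I_mul_ofReal_le ((ω₁ - ω') * δ) ((ω₂ - ω') * δ)
    rw [← sub_mul, sub_sub_sub_cancel_right, abs_mul, abs_of_pos hδ] at this
    rw [hD, ← mul_sub, sub_sub_sub_cancel_right, norm_mul, Complex.norm_natCast, hTdef, mul_assoc,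
      mul_comm δ]
    gcongr
  have hs_lip : ‖(↑(Real.sin ((ω₁ - ω') * T)) : ℂ) - ↑(Real.sin ((ω₂ - ω') * T))‖ ≤
      T * |ω₁ - ω₂| := by
    rw [← ofReal_sub, norm_real, Real.norm_eq_abs]
    refine (abs_sin_sub_sin_le _ _).trans_eq ?_
    rw [← sub_mul, sub_sub_sub_cancel_right, abs_mul, abs_of_pos hT, mul_comm]
  have hs_le : ‖(↑(Real.sin ((ω₂ - ω') * T)) : ℂ)‖ ≤ 1 := by
    rw [norm_real, Real.norm_eq_abs]; exact abs_sin_le_one _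
  rw [hfD, hfD]
  refine (norm_div_sub_div_le (by positivity) (hD_lower ω₁ h₁l h₁u) (hD_lower ω₂ h₂l h₂u)
    hs_lip hs_le hD_lip).trans_eq ?_
  field_simp

/-- Lemma 5(b): the function `f(ω) = sin((ω-ω')T) / (J'(e^{i(ω-ω')δ} - 1))` is
Lipschitz on `{ω : γ' ≤ |ω-ω'| < 2c'/δ}` with constant `1/(ε'γ') + 1/(T(ε'γ')²)`. -/
theorem filter_function_lipschitz (ω' δ γ' T ε' c' : ℝ) (J' : ℕ)
    (hδ : 0 < δ) (hJ' : 0 < J') (hTdef : T = (J' : ℝ) * δ)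
    (hγ' : 0 < γ') (hε'pos : 0 < ε') (hε'lt : ε' < 1) (hc' : 0 < c')
    -- `ε'` and `c'` are as in Lemma 5(a):
    (hε'sup : ∀ y : ℝ, γ' ≤ |y| → |Real.sin (y * T) / (y * T)| ≤ ε')
    (hsinc : ∀ x : ℝ, 0 < |x| → |x| < c' → ε' < |Real.sin x / x|)
    (f : ℝ → ℂ)
    (hf : ∀ ω : ℝ, f ω = (Real.sin ((ω - ω') * T) : ℂ) /
      ((J' : ℂ) * (Complex.exp (Complex.I * ((ω - ω') * δ)) - 1))) :
    ∀ ω₁ ω₂ : ℝ,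
      γ' ≤ |ω₁ - ω'| → |ω₁ - ω'| < 2 * c' / δ →
      γ' ≤ |ω₂ - ω'| → |ω₂ - ω'| < 2 * c' / δ →
      ‖f ω₁ - f ω₂‖ ≤
        (1 / (ε' * γ') + 1 / (T * (ε' * γ') ^ 2)) * |ω₁ - ω₂| :=
  filter_function_lipschitz_general ω' δ γ' T ε' c' J' hδ hJ' hTdef hγ' hε'pos hsinc f hf
end

section
/- Let x : ℝ → ℂ, ω' ∈ ℝ, δ > 0, J, J' positive integers, and define y(t) := x(t) − (1/(2J'))·Σ_{n=−J'}^{J'−1} e^{−iω'nδ}·x(t + nδ). Then Σ_{j=−J}^{J} |y(jδ)|² ≤ 4·Σ_{m=−J−J'}^{J+J'−1} |x(mδ)|². -/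
/-!
Write `y = x - S` with `S` the weighted mean of the `2J'` shifted samples. Then
`‖y‖² ≤ 2‖x‖² + 2‖S‖²`, and since the weights have modulus one, Cauchy–Schwarz gives
`‖S‖² ≤ (2J')⁻¹ ∑ₙ ‖x(t + nδ)‖²`. Summing over `j`, every sample `x(mδ)` of the larger window
is counted at most `2J'` times by the double sum, so each of the two terms contributes at most
`2 ∑ₘ ‖x(mδ)‖²`.
-/

open Finset

theorem sum_sum_add_le_card_nsmul_sum {G M : Type*} [Add G] [IsRightCancelAdd G]
    [AddCommMonoid M] [PartialOrder M] [IsOrderedAddMonoid M]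
    {A B C : Finset G} (f : G → M) (hABC : ∀ j ∈ A, ∀ n ∈ B, j + n ∈ C)
    (hf : ∀ m ∈ C, 0 ≤ f m) :
    ∑ j ∈ A, ∑ n ∈ B, f (j + n) ≤ #B • ∑ m ∈ C, f m := by
  rw [sum_comm]
  refine sum_le_card_nsmul B _ _ fun n hn => ?_
  refine (sum_map A (addRightEmbedding n) f).ge.trans <|
    sum_le_sum_of_subset_of_nonneg ?_ fun m hm _ => hf m hm
  intro m hm
  obtain ⟨j, hj, rfl⟩ := mem_map.1 hm
  exact hABC j hj n hn

theorem sq_norm_smul_sum_smul_le {𝕜 E ι : Type*} [RCLike 𝕜] [NormedAddCommGroup E]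
    [NormedSpace 𝕜 E] (s : Finset ι) (w : ι → 𝕜) (z : ι → E) (hw : ∀ i ∈ s, ‖w i‖ ≤ 1) :
    ‖(#s : 𝕜)⁻¹ • ∑ i ∈ s, w i • z i‖ ^ 2 ≤ (#s : ℝ)⁻¹ * ∑ i ∈ s, ‖z i‖ ^ 2 := by
  have hsum : ‖∑ i ∈ s, w i • z i‖ ≤ ∑ i ∈ s, ‖z i‖ :=
    (norm_sum_le _ _).trans <| sum_le_sum fun i hi => by
      rw [norm_smul]; exact mul_le_of_le_one_left (norm_nonneg _) (hw i hi)
  have hCS : (∑ i ∈ s, ‖z i‖) ^ 2 ≤ #s * ∑ i ∈ s, ‖z i‖ ^ 2 := sq_sum_le_card_mul_sum_sq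
  calc ‖(#s : 𝕜)⁻¹ • ∑ i ∈ s, w i • z i‖ ^ 2
      = (#s : ℝ)⁻¹ ^ 2 * ‖∑ i ∈ s, w i • z i‖ ^ 2 := by
        rw [norm_smul, mul_pow, norm_inv, RCLike.norm_natCast]
    _ ≤ (#s : ℝ)⁻¹ ^ 2 * (#s * ∑ i ∈ s, ‖z i‖ ^ 2) := by
        gcongr
        exact (pow_le_pow_left₀ (norm_nonneg _) hsum 2).trans hCS
    _ = (#s : ℝ)⁻¹ * ∑ i ∈ s, ‖z i‖ ^ 2 := by
        rcases (#s).eq_zero_or_pos with h | h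
        · simp [h]
        · field_simp

theorem sq_norm_sub_le {E : Type*} [SeminormedAddCommGroup E] (a b : E) :
    ‖a - b‖ ^ 2 ≤ 2 * (‖a‖ ^ 2 + ‖b‖ ^ 2) :=
  (pow_le_pow_left₀ (norm_nonneg _) (norm_sub_le a b) 2).trans add_sq_le

theorem card_Icc_neg_sub_one (k : ℕ) : #(Icc (-(k : ℤ)) (k - 1)) = 2 * k := by
  simp only [Int.card_Icc]; omega

open Complex

theorem filtered_samples_estimate_general (x : ℝ → ℂ) (ω' δ : ℝ)
    (J J' : ℕ) (hJ' : 0 < J')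
    (y : ℝ → ℂ)
    (hy : ∀ t : ℝ, y t = x t - (1 / (2 * (J' : ℂ))) *
      ∑ n ∈ Finset.Icc (-(J' : ℤ)) ((J' : ℤ) - 1),
        Complex.exp (-Complex.I * (ω' * (n : ℝ) * δ)) * x (t + (n : ℝ) * δ)) :
    ∑ j ∈ Finset.Icc (-(J : ℤ)) (J : ℤ), ‖y ((j : ℝ) * δ)‖ ^ 2 ≤
      4 * ∑ m ∈ Finset.Icc (-(J : ℤ) - (J' : ℤ)) ((J : ℤ) + (J' : ℤ) - 1),
        ‖x ((m : ℝ) * δ)‖ ^ 2 := by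
  set A := Icc (-(J : ℤ)) J
  set B := Icc (-(J' : ℤ)) ((J' : ℤ) - 1)
  set C := Icc (-(J : ℤ) - (J' : ℤ)) ((J : ℤ) + (J' : ℤ) - 1)
  set f : ℤ → ℝ := fun m => ‖x (m * δ)‖ ^ 2
  have hB : (#B : ℂ) = 2 * J' := by exact_mod_cast card_Icc_neg_sub_one J'
  have hB_pos : (0 : ℝ) < #B := by rw [card_Icc_neg_sub_one]; positivity
  have pointwise (j : ℤ) :
      ‖y (j * δ)‖ ^ 2 ≤ 2 * (f j + (#B : ℝ)⁻¹ * ∑ n ∈ B, f (j + n)) := by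
    have hshift (n : ℤ) : (j : ℝ) * δ + n * δ = ((j + n : ℤ) : ℝ) * δ := by push_cast; ring
    have hmean := sq_norm_smul_sum_smul_le B (fun n : ℤ => exp (-I * (ω' * (n : ℝ) * δ)))
      (fun n => x (j * δ + n * δ)) fun n _ => by simp [norm_exp]
    simp only [hshift, smul_eq_mul] at hmean
    rw [hy, one_div, ← hB]
    simp_rw [hshift]
    exact (sq_norm_sub_le _ _).trans (by gcongr)
  have hAC : ∀ j ∈ A, ∀ n ∈ B, j + n ∈ C := by
    simp only [A, B, C, mem_Icc]; intros; omega
  have hwindow := sum_sum_add_le_card_nsmul_sum f hAC fun m _ => sq_nonneg _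
  have hAsub : ∑ j ∈ A, f j ≤ ∑ m ∈ C, f m :=
    sum_le_sum_of_subset_of_nonneg
      (fun j hj => by simpa using hAC j hj 0 (by simp [B]; omega)) fun m _ _ => sq_nonneg _
  calc ∑ j ∈ A, ‖y (j * δ)‖ ^ 2
      ≤ 2 * (∑ j ∈ A, f j + (#B : ℝ)⁻¹ * ∑ j ∈ A, ∑ n ∈ B, f (j + n)) := by
        rw [mul_sum (s := A), ← sum_add_distrib, mul_sum]
        exact sum_le_sum fun j _ => pointwise j
    _ ≤ 2 * (∑ m ∈ C, f m + (#B : ℝ)⁻¹ * (#B • ∑ m ∈ C, f m)) := by gcongr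
    _ = 4 * ∑ m ∈ C, f m := by rw [nsmul_eq_mul, inv_mul_cancel_left₀ hB_pos.ne']; ring

/-- Averaging-filter estimate: the filtered samples are controlled by the samples of
`x` on a larger discrete window. -/
theorem filtered_samples_estimate (x : ℝ → ℂ) (ω' δ : ℝ) (hδ : 0 < δ)
    (J J' : ℕ) (hJ : 0 < J) (hJ' : 0 < J')
    (y : ℝ → ℂ)
    (hy : ∀ t : ℝ, y t = x t - (1 / (2 * (J' : ℂ))) *
      ∑ n ∈ Finset.Icc (-(J' : ℤ)) ((J' : ℤ) - 1),
        Complex.exp (-Complex.I * (ω' * (n : ℝ) * δ)) * x (t + (n : ℝ) * δ)) :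
    ∑ j ∈ Finset.Icc (-(J : ℤ)) (J : ℤ), ‖y ((j : ℝ) * δ)‖ ^ 2 ≤
      4 * ∑ m ∈ Finset.Icc (-(J : ℤ) - (J' : ℤ)) ((J : ℤ) + (J' : ℤ) - 1),
        ‖x ((m : ℝ) * δ)‖ ^ 2 :=
  filtered_samples_estimate_general x ω' δ J J' hJ' y hy
end
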